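/- arXiv:2103.05060 — 2 statements merged into one kernel-verified Lean document; each statement's English description precedes it below -/
import Mathlib

section
/- Let M be a smooth manifold, ∇ a flat connection on the tangent bundle TM (curvature R^∇ = 0), and ξ a vector field satisfying ∇_X ξ = X for all vector fields X. Then ∇ is torsion-free: ∇_X Y - ∇_Y X - [X,Y] = 0 for all vector fields X, Y. -/
/-- Abstract formulation for vector fields on a smooth manifold: `Γ` is the Lie algebra of
vector fields and `nabla` an (ℝ-bilinear) connection.  If `nabla` is flat and admits a
vector field `ξ` with `nabla X ξ = X` for all `X`, then `nabla` is torsion-free. -/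
theorem flat_connection_with_euler_field_torsion_free
    (Γ : Type*) [LieRing Γ] [Module ℝ Γ] [LieAlgebra ℝ Γ]
    (nabla : Γ →ₗ[ℝ] Γ →ₗ[ℝ] Γ)
    (hflat : ∀ X Y Z : Γ,
      nabla X (nabla Y Z) - nabla Y (nabla X Z) - nabla ⁅X, Y⁆ Z = 0)
    (ξ : Γ) (hξ : ∀ X : Γ, nabla X ξ = X) :
    ∀ X Y : Γ, nabla X Y - nabla Y X - ⁅X, Y⁆ = 0 := by
  intro X Y
  have := hflat X Y ξ
  rwa [hξ X, hξ Y, hξ ⁅X, Y⁆] at this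
end

section
/- Let M be a smooth manifold with an almost complex structure I, ∇ a flat connection on TM, and ξ a vector field such that ∇_X ξ = X and ∇_X(Iξ) = IX for all vector fields X. Then the tensor (∇_X I)Y is symmetric in X and Y: (∇_X I)Y = (∇_Y I)X for all vector fields X, Y. -/
/-- Abstract formulation: `Γ` is the Lie algebra of vector fields on a manifold, `J` an
almost complex structure (`J² = -id`), `nabla` a flat connection with `nabla X ξ = X` and
`nabla X (Jξ) = J X` for all `X`.  Then the tensor `(∇_X J)Y = ∇_X(JY) - J ∇_X Y` is
symmetric in `X` and `Y`. -/
theorem flat_conic_connection_nabla_J_symmetric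
    (Γ : Type*) [LieRing Γ] [Module ℝ Γ] [LieAlgebra ℝ Γ]
    (nabla : Γ →ₗ[ℝ] Γ →ₗ[ℝ] Γ)
    (hflat : ∀ X Y Z : Γ,
      nabla X (nabla Y Z) - nabla Y (nabla X Z) - nabla ⁅X, Y⁆ Z = 0)
    (J : Γ →ₗ[ℝ] Γ) (hJ : ∀ X : Γ, J (J X) = -X)
    (ξ : Γ)
    (hξ : ∀ X : Γ, nabla X ξ = X)
    (hJξ : ∀ X : Γ, nabla X (J ξ) = J X) :
    ∀ X Y : Γ, nabla X (J Y) - J (nabla X Y) = nabla Y (J X) - J (nabla Y X) := by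
  intro X Y
  have htor : nabla X Y - nabla Y X = ⁅X, Y⁆ := by
    have h := hflat X Y ξ
    rw [hξ, hξ, hξ] at h
    have := sub_eq_zero.mp h
    exact this
  have h2 := hflat X Y (J ξ)
  rw [hJξ, hJξ, hJξ] at h2
  have h3 : nabla X (J Y) - nabla Y (J X) = J ⁅X, Y⁆ := by
    have := sub_eq_zero.mp h2
    exact this
  rw [← htor, map_sub] at h3
  have := sub_eq_sub_iff_sub_eq_sub.mp h3
  exact this
end
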